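/- Let A and B be finite planar point sets separated by the vertical line x = c (A strictly left, B strictly right), and let [a, b] with a ∈ A, b ∈ B be the upper bridge: every point of A ∪ B is weakly below the line ℓ through a and b. Then ℓ is a supporting line of conv(A ∪ B), and every point of A with x-coordinate greater than a.1 lies strictly below ℓ or equals a, provided a is the unique point of A on ℓ; symmetrically for B. Moreover a and b are consecutive vertices of the upper hull of A ∪ B: no point of A ∪ B with x-coordinate strictly between a.1 and b.1 lies on the upper hull of A ∪ B except points on ℓ. -/

import Mathlib

/-! The closed half-plane below `ℓ` is convex, so it contains `conv (A ∪ B)`. If an upper-hull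
vertex `v` lies on a line `ℓ'` with `A ∪ B` weakly below it, then the vertical gap from `ℓ` up
to `ℓ'` is an affine function of `x` that is nonnegative at `a.1` and `b.1`, hence at `v.1`;
so `v` is on or above `ℓ`, and being below `ℓ`, it is on `ℓ`. -/

/-- `p` lies weakly below the line `y = α x + β`. -/
def BelowLine (α β : ℝ) (p : ℝ × ℝ) : Prop := p.2 ≤ α * p.1 + β

/-- `p` lies on the line `y = α x + β`. -/
def OnLine (α β : ℝ) (p : ℝ × ℝ) : Prop := p.2 = α * p.1 + β

/-- `v` is an extreme point (vertex) of the convex hull of `S`. -/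
def IsHullVertex (S : Set (ℝ × ℝ)) (v : ℝ × ℝ) : Prop :=
  v ∈ S ∧ v ∉ convexHull ℝ (S \ {v})

/-- `v` is a vertex of the upper hull of `S`. -/
def IsUpperVertex (S : Set (ℝ × ℝ)) (v : ℝ × ℝ) : Prop :=
  IsHullVertex S v ∧ ∃ α β : ℝ, OnLine α β v ∧ ∀ p ∈ S, BelowLine α β p

theorem convex_setOf_belowLine (α β : ℝ) : Convex ℝ {p : ℝ × ℝ | BelowLine α β p} := by
  have hf : IsLinearMap ℝ (fun p : ℝ × ℝ => p.2 - α * p.1) :=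
    ⟨fun p q => by simp only [Prod.fst_add, Prod.snd_add]; ring,
      fun r p => by simp only [Prod.smul_fst, Prod.smul_snd, smul_eq_mul]; ring⟩
  have hset : {p : ℝ × ℝ | BelowLine α β p} = {p | p.2 - α * p.1 ≤ β} := by
    ext p
    exact (sub_le_iff_le_add' (a := p.2) (b := α * p.1) (c := β)).symm
  exact hset ▸ convex_halfSpace_le hf β

theorem belowLine_of_mem_convexHull {S : Set (ℝ × ℝ)} {α β : ℝ}
    (hS : ∀ p ∈ S, BelowLine α β p) : ∀ p ∈ convexHull ℝ S, BelowLine α β p :=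
  fun _ hp => convexHull_min hS (convex_setOf_belowLine α β) hp

theorem lt_of_belowLine_of_unique_onLine {α β : ℝ} {a p : ℝ × ℝ} (hp : BelowLine α β p)
    (huniq : OnLine α β p → p = a) (hne : p.1 ≠ a.1) : p.2 < α * p.1 + β :=
  lt_of_le_of_ne hp fun hon => hne (congrArg Prod.fst (huniq hon))

theorem affine_le_of_le_of_le {α β α' β' x₁ x₂ x : ℝ}
    (h₁ : α * x₁ + β ≤ α' * x₁ + β') (h₂ : α * x₂ + β ≤ α' * x₂ + β')
    (hx₁ : x₁ ≤ x) (hx₂ : x ≤ x₂) : α * x + β ≤ α' * x + β' := by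
  rcases hx₁.eq_or_lt with rfl | hlt
  · exact h₁
  -- `(x₂ - x₁) • gap x = (x₂ - x) • gap x₁ + (x - x₁) • gap x₂` for the affine `gap`
  nlinarith [mul_nonneg (sub_nonneg.2 h₁) (sub_nonneg.2 hx₂),
    mul_nonneg (sub_nonneg.2 h₂) (sub_nonneg.2 hx₁)]

theorem onLine_of_supported_between {α β α' β' : ℝ} {a b v : ℝ × ℝ}
    (ha : OnLine α β a) (hb : OnLine α β b) (hv : BelowLine α β v)
    (ha' : BelowLine α' β' a) (hb' : BelowLine α' β' b) (hv' : OnLine α' β' v)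
    (hav : a.1 ≤ v.1) (hvb : v.1 ≤ b.1) : OnLine α β v := by
  unfold OnLine BelowLine at *
  have hgap : α * v.1 + β ≤ α' * v.1 + β' :=
    affine_le_of_le_of_le (ha ▸ ha') (hb ▸ hb') hav hvb
  linarith

theorem upper_bridge_properties_general (A B : Finset (ℝ × ℝ))
    (a b : ℝ × ℝ) (ha : a ∈ A) (hb : b ∈ B) (α β : ℝ)
    (hal : OnLine α β a) (hbl : OnLine α β b)
    (hbelow : ∀ p ∈ (A : Set (ℝ × ℝ)) ∪ (B : Set (ℝ × ℝ)), BelowLine α β p) :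
    (∀ p ∈ convexHull ℝ ((A : Set (ℝ × ℝ)) ∪ (B : Set (ℝ × ℝ))), BelowLine α β p) ∧
    ((∀ p ∈ A, OnLine α β p → p = a) →
      ∀ p ∈ A, a.1 < p.1 → p.2 < α * p.1 + β) ∧
    ((∀ p ∈ B, OnLine α β p → p = b) →
      ∀ p ∈ B, p.1 < b.1 → p.2 < α * p.1 + β) ∧
    (∀ v, IsUpperVertex ((A : Set (ℝ × ℝ)) ∪ (B : Set (ℝ × ℝ))) v →
      a.1 < v.1 → v.1 < b.1 → OnLine α β v) := by
  refine ⟨belowLine_of_mem_convexHull hbelow, ?_, ?_, ?_⟩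
  · intro huniq p hp hap
    exact lt_of_belowLine_of_unique_onLine (hbelow p (Or.inl hp)) (huniq p hp) hap.ne'
  · intro huniq p hp hpb
    exact lt_of_belowLine_of_unique_onLine (hbelow p (Or.inr hp)) (huniq p hp) hpb.ne
  · rintro v ⟨⟨hvS, -⟩, α', β', hv', hsupp⟩ hav hvb
    exact onLine_of_supported_between hal hbl (hbelow v hvS)
      (hsupp a (Or.inl ha)) (hsupp b (Or.inr hb)) hv' hav.le hvb.le

/-- Properties of the upper bridge `[a,b]` between vertically separated sets `A` and `B`
with supporting line `ℓ : y = α x + β`: `ℓ` supports `conv (A ∪ B)`; if `a` is the only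
point of `A` on `ℓ` then every point of `A` to the right of `a` is strictly below `ℓ`
(symmetrically for `B`); and `a`, `b` are consecutive on the upper hull of `A ∪ B`:
no upper hull vertex strictly between them in `x` lies off the line `ℓ`. -/
theorem upper_bridge_properties (A B : Finset (ℝ × ℝ)) (c : ℝ)
    (hinj : Set.InjOn Prod.fst ((A : Set (ℝ × ℝ)) ∪ (B : Set (ℝ × ℝ))))
    (hA : ∀ p ∈ A, p.1 < c) (hB : ∀ p ∈ B, c < p.1)
    (a b : ℝ × ℝ) (ha : a ∈ A) (hb : b ∈ B) (α β : ℝ)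
    (hal : OnLine α β a) (hbl : OnLine α β b)
    (hbelow : ∀ p ∈ (A : Set (ℝ × ℝ)) ∪ (B : Set (ℝ × ℝ)), BelowLine α β p) :
    (∀ p ∈ convexHull ℝ ((A : Set (ℝ × ℝ)) ∪ (B : Set (ℝ × ℝ))), BelowLine α β p) ∧
    ((∀ p ∈ A, OnLine α β p → p = a) →
      ∀ p ∈ A, a.1 < p.1 → p.2 < α * p.1 + β) ∧
    ((∀ p ∈ B, OnLine α β p → p = b) →
      ∀ p ∈ B, p.1 < b.1 → p.2 < α * p.1 + β) ∧
    (∀ v, IsUpperVertex ((A : Set (ℝ × ℝ)) ∪ (B : Set (ℝ × ℝ))) v →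
      a.1 < v.1 → v.1 < b.1 → OnLine α β v) :=
  upper_bridge_properties_general A B a b ha hb α β hal hbl hbelow
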